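/- Let ⪯ be a disjunctive entrenchment relation. Then for all α, β: α maxiconsistently infers β if and only if ¬β ⪯ ¬α. -/

import Mathlib

/-- A propositional language: a type of sentences with boolean connectives. -/
structure Lang (L : Type) where
  or : L → L → L
  and : L → L → L
  not : L → L
  imp : L → L → L
  bot : L
  top : L

/-- A classical valuation of the language: respects all connectives. -/
def Lang.Val {L : Type} (S : Lang L) (v : L → Prop) : Prop :=
  (∀ a b, v (S.or a b) ↔ v a ∨ v b) ∧
  (∀ a b, v (S.and a b) ↔ v a ∧ v b) ∧
  (∀ a, v (S.not a) ↔ ¬ v a) ∧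
  (∀ a b, v (S.imp a b) ↔ (v a → v b)) ∧
  ¬ v S.bot ∧ v S.top

/-- Classical consequence from a set of premises. -/
def Lang.SEnt {L : Type} (S : Lang L) (X : Set L) (b : L) : Prop :=
  ∀ v, S.Val v → (∀ a ∈ X, v a) → v b

/-- Classical consequence between single sentences: α ⊢ β. -/
def Lang.ent {L : Type} (S : Lang L) (a b : L) : Prop := S.SEnt {a} b

/-- Deductive closure. -/
def Lang.Cn {L : Type} (S : Lang L) (X : Set L) : Set L := {b | S.SEnt X b}

/-- Coh(α) = {β | ¬ (β ⪯ ¬α)}. -/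
def Coh {L : Type} (S : Lang L) (pr : L → L → Prop) (a : L) : Set L :=
  {b | ¬ pr b (S.not a)}

/-- The base of α: deductively closed subsets of Coh(α). -/
def Base {L : Type} (S : Lang L) (pr : L → L → Prop) (a : L) : Set (Set L) :=
  {U | U = S.Cn U ∧ U ⊆ Coh S pr a}

/-- The maximal base of α. -/
def MaxBase {L : Type} (S : Lang L) (pr : L → L → Prop) (a : L) : Set (Set L) :=
  {U | U ∈ Base S pr a ∧ ∀ U', U' = S.Cn U' → U ⊂ U' → U' ∉ Base S pr a}

/-- Maxiconsistent inference: α |~⪯ β. -/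
def MInf {L : Type} (S : Lang L) (pr : L → L → Prop) (a b : L) : Prop :=
  ∀ U ∈ MaxBase S pr a, b ∈ S.Cn (U ∪ {a})

/-! The sentences `c ⪯ ¬α` are closed under finite disjunctions, by Left Disjunction. If
`¬β ⋠ ¬α`, then for every such `c` some valuation makes `α` true and `β`, `c` false (otherwise
`¬β ⊢ ¬α ∨ c ⪯ ¬α`), so by compactness one valuation does this for all of them at once; its theory
is a maximal base of `α` which together with `α` does not entail `β`.
Conversely, a base `U` of `α` stays inside `Coh(α)` when closed up with any `δ` such that
`¬δ ⪯ ¬α`: a consequence `c ⪯ ¬α` would put `δ → c ⊢ ¬δ ∨ c ⪯ ¬α` into `U`. If `¬β ⪯ ¬α` this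
applies to `δ = α → β`, which therefore lies in every maximal base. -/

lemma isClosed_setOf_apply₃ {ι β : Type*} [TopologicalSpace β] [DiscreteTopology β]
    (P : β → β → β → Prop) (i j k : ι) : IsClosed {f : ι → β | P (f i) (f j) (f k)} :=
  (isClosed_discrete {p : β × β × β | P p.1 p.2.1 p.2.2}).preimage
    (f := fun f : ι → β => (f i, f j, f k)) (by fun_prop)

namespace Lang

section

variable {L : Type} (S : Lang L)

lemma subset_Cn (X : Set L) : X ⊆ S.Cn X :=
  fun _ hx _ _ hv => hv _ hx

lemma Cn_Cn (X : Set L) : S.Cn (S.Cn X) = S.Cn X :=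
  Set.Subset.antisymm (fun _ hc v hv hX => hc v hv fun _ hd => hd v hv hX) (S.subset_Cn _)

lemma Cn_setOf {v : L → Prop} (hv : S.Val v) : S.Cn {c | v c} = {c | v c} :=
  Set.Subset.antisymm (fun _ hc => hc v hv fun _ h => h) (S.subset_Cn _)

/-- Valuations as points of `L → Bool`, which is compact by Tychonoff's theorem. -/
def boolVals : Set (L → Bool) := {w | S.Val (w · = true)}

lemma isCompact_boolVals : IsCompact S.boolVals := by
  refine IsClosed.isCompact ?_
  simp only [boolVals, Val, Set.ofPred_and, Set.ofPred_forall]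
  repeat' first | apply IsClosed.inter | apply isClosed_iInter; intro
  exacts [isClosed_setOf_apply₃ (fun x y z => (x = true ↔ y = true ∨ z = true)) _ _ _,
    isClosed_setOf_apply₃ (fun x y z => (x = true ↔ y = true ∧ z = true)) _ _ _,
    isClosed_setOf_apply₃ (fun x y _ => (x = true ↔ ¬ y = true)) _ _ S.top,
    isClosed_setOf_apply₃ (fun x y z => (x = true ↔ (y = true → z = true))) _ _ _,
    isClosed_setOf_apply₃ (fun x _ _ => ¬ x = true) _ S.top S.top,
    isClosed_setOf_apply₃ (fun x _ _ => x = true) _ S.top S.top]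

variable {S} {v : L → Prop} {a b c : L}

lemma decide_mem_boolVals [DecidablePred v] (hv : S.Val v) :
    (fun x => decide (v x)) ∈ S.boolVals := by
  simpa [boolVals] using hv

lemma Val.or (hv : S.Val v) (a b : L) : v (S.or a b) ↔ v a ∨ v b := hv.1 a b

lemma Val.not (hv : S.Val v) (a : L) : v (S.not a) ↔ ¬ v a := hv.2.2.1 a

lemma Val.imp (hv : S.Val v) (a b : L) : v (S.imp a b) ↔ (v a → v b) := hv.2.2.2.1 a b

lemma ent_iff : S.ent a b ↔ ∀ v, S.Val v → v a → v b :=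
  ⟨fun h v hv ha => h v hv fun _ hx => hx ▸ ha, fun h v hv ha => h v hv (ha a rfl)⟩

lemma ent.trans (hab : S.ent a b) (hbc : S.ent b c) : S.ent a c :=
  ent_iff.2 fun v hv ha => ent_iff.1 hbc v hv (ent_iff.1 hab v hv ha)

lemma ent_or_left (a b : L) : S.ent a (S.or a b) :=
  ent_iff.2 fun _ hv ha => (hv.or _ _).2 (.inl ha)

lemma ent_or_right (a b : L) : S.ent b (S.or a b) :=
  ent_iff.2 fun _ hv hb => (hv.or _ _).2 (.inr hb)

lemma ent_not_imp (a b : L) : S.ent (S.not (S.imp a b)) (S.not b) :=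
  ent_iff.2 fun _ hv h => by rw [hv.not, hv.imp] at h; rw [hv.not]; tauto

lemma ent_imp_or_not (a b : L) : S.ent (S.imp a b) (S.or (S.not a) b) :=
  ent_iff.2 fun _ hv h => by rw [hv.imp] at h; rw [hv.or, hv.not]; tauto

lemma imp_mem_Cn_of_mem_Cn_insert {X : Set L} (h : b ∈ S.Cn (insert a X)) :
    S.imp a b ∈ S.Cn X := fun v hv hX =>
  (hv.imp a b).2 fun ha => h v hv fun _ hc => hc.elim (· ▸ ha) (hX _)

lemma exists_val_forall_not_of_finset {I : Set L}
    (h : ∀ u : Finset I, ∃ v, S.Val v ∧ v a ∧ ¬ v b ∧ ∀ c ∈ u, ¬ v c.1) :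
    ∃ v, S.Val v ∧ v a ∧ ¬ v b ∧ ∀ c ∈ I, ¬ v c := by
  classical
  have hfin : ∀ u : Finset I, (S.boolVals ∩ {w | w a = true ∧ ¬ w b = true} ∩
      ⋂ c ∈ u, {w : L → Bool | ¬ w c.1 = true}).Nonempty := by
    intro u
    obtain ⟨v, hv, ha, hb, hu⟩ := h u
    refine ⟨_, ⟨decide_mem_boolVals hv, by simpa using ha, by simpa using hb⟩, ?_⟩
    simpa only [Set.mem_iInter, Set.mem_ofPred_eq, decide_eq_true_eq] using hu
  obtain ⟨w, ⟨hw, ha, hb⟩, hI⟩ := (S.isCompact_boolVals.inter_right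
    (isClosed_setOf_apply₃ (fun x y _ => x = true ∧ ¬ y = true) a b a)).inter_iInter_nonempty _
    (fun c : I => isClosed_setOf_apply₃ (fun x _ _ => ¬ x = true) c.1 a a) hfin
  exact ⟨(w · = true), hw, ha, hb, fun c hc => Set.mem_iInter.1 hI ⟨c, hc⟩⟩

end

end Lang

section Entrenchment

variable {L : Type} {S : Lang L} {pr : L → L → Prop}

lemma exists_pr_forall_ent_of_finset (hrefl : ∀ a, pr a a)
    (hld : ∀ a b c, pr b a → pr c a → pr (S.or b c) a) {e : L} (u : Finset {c | pr c e}) :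
    ∃ d, pr d e ∧ ∀ c ∈ u, S.ent c.1 d := by
  classical
  induction u using Finset.induction_on with
  | empty => exact ⟨e, hrefl e, by simp⟩
  | insert c u _ ih =>
    obtain ⟨d, hd, hud⟩ := ih
    refine ⟨S.or d c, hld _ _ _ hd c.2, fun x hx => ?_⟩
    rcases Finset.mem_insert.1 hx with rfl | hx
    · exact Lang.ent_or_right _ _
    · exact (hud x hx).trans (Lang.ent_or_left _ _)

lemma exists_val_not_of_not_pr (hrefl : ∀ a, pr a a)
    (hlm : ∀ a b c, S.ent a b → pr b c → pr a c)
    (hld : ∀ a b c, pr b a → pr c a → pr (S.or b c) a) {a b d : L}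
    (h : ¬ pr (S.not b) (S.not a)) (hd : pr d (S.not a)) :
    ∃ v, S.Val v ∧ v a ∧ ¬ v b ∧ ¬ v d := by
  by_contra! hno
  refine h (hlm _ _ _ (Lang.ent_iff.2 fun v hv hb => ?_) (hld _ _ _ (hrefl _) hd))
  rw [hv.not] at hb
  rw [hv.or, hv.not]
  by_cases ha : v a
  exacts [.inr (hno v hv ha hb), .inl ha]

lemma exists_val_of_not_pr (hrefl : ∀ a, pr a a) (hlm : ∀ a b c, S.ent a b → pr b c → pr a c)
    (hld : ∀ a b c, pr b a → pr c a → pr (S.or b c) a) {a b : L}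
    (h : ¬ pr (S.not b) (S.not a)) :
    ∃ v, S.Val v ∧ v a ∧ ¬ v b ∧ ∀ c, pr c (S.not a) → ¬ v c := by
  refine Lang.exists_val_forall_not_of_finset fun u => ?_
  obtain ⟨d, hd, hud⟩ := exists_pr_forall_ent_of_finset hrefl hld u
  obtain ⟨v, hv, ha, hb, hdv⟩ := exists_val_not_of_not_pr hrefl hlm hld h hd
  exact ⟨v, hv, ha, hb, fun c hc hvc => hdv (Lang.ent_iff.1 (hud c hc) v hv hvc)⟩

lemma setOf_mem_maxBase (hrefl : ∀ a, pr a a) {a : L} {v : L → Prop} (hv : S.Val v)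
    (hI : ∀ c, pr c (S.not a) → ¬ v c) : {c | v c} ∈ MaxBase S pr a := by
  refine ⟨⟨(S.Cn_setOf hv).symm, fun c hc hca => hI c hca hc⟩, fun U hU hvU hUbase => ?_⟩
  obtain ⟨c, hcU, hc⟩ := Set.exists_of_ssubset hvU
  have hnc : S.not c ∈ U := hvU.1 ((hv.not c).2 hc)
  have hna : S.not a ∈ U :=
    hU ▸ fun w hw hwU => absurd (hwU c hcU) ((hw.not c).1 (hwU _ hnc))
  exact hUbase.2 hna (hrefl _)

lemma Cn_insert_mem_base (hlm : ∀ a b c, S.ent a b → pr b c → pr a c)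
    (hld : ∀ a b c, pr b a → pr c a → pr (S.or b c) a) {a d : L} {U : Set L}
    (hU : U ∈ Base S pr a) (hd : pr (S.not d) (S.not a)) : S.Cn (insert d U) ∈ Base S pr a := by
  refine ⟨(S.Cn_Cn _).symm, fun c hc hca => ?_⟩
  have himp : S.imp d c ∈ U := hU.1 ▸ Lang.imp_mem_Cn_of_mem_Cn_insert hc
  exact hU.2 himp (hlm _ _ _ (Lang.ent_imp_or_not d c) (hld _ _ _ hd hca))

lemma mem_of_mem_maxBase (hlm : ∀ a b c, S.ent a b → pr b c → pr a c)
    (hld : ∀ a b c, pr b a → pr c a → pr (S.or b c) a) {a d : L} {U : Set L}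
    (hU : U ∈ MaxBase S pr a) (hd : pr (S.not d) (S.not a)) : d ∈ U := by
  by_contra hdU
  refine hU.2 _ (S.Cn_Cn _).symm ?_ (Cn_insert_mem_base hlm hld hU.1 hd)
  exact ((Set.subset_insert _ _).trans (S.subset_Cn _)).ssubset_of_not_subset
    fun h => hdU (h (S.subset_Cn _ (Set.mem_insert _ _)))

end Entrenchment

theorem stmt17_general {L : Type} (S : Lang L) (pr : L → L → Prop)
    (hrefl : ∀ a, pr a a)
    (hlm : ∀ a b c, S.ent a b → pr b c → pr a c)
    (hld : ∀ a b c, pr b a → pr c a → pr (S.or b c) a) :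
    ∀ a b, MInf S pr a b ↔ pr (S.not b) (S.not a) := by
  intro a b
  constructor
  · intro hab
    by_contra h
    obtain ⟨v, hv, ha, hb, hI⟩ := exists_val_of_not_pr hrefl hlm hld h
    exact hb (hab _ (setOf_mem_maxBase hrefl hv hI) v hv fun x hx => hx.elim id (· ▸ ha))
  · intro h U hU
    have himp : S.imp a b ∈ U :=
      mem_of_mem_maxBase hlm hld hU (hlm _ _ _ (Lang.ent_not_imp a b) h)
    exact fun v hv hUa => (hv.imp a b).1 (hUa _ (.inl himp)) (hUa _ (.inr rfl))

/-- For a disjunctive entrenchment relation, α |~⪯ β iff ¬β ⪯ ¬α. -/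
theorem stmt17 {L : Type} (S : Lang L) (pr : L → L → Prop)
    (hrefl : ∀ a, pr a a)
    (hlm : ∀ a b c, S.ent a b → pr b c → pr a c)
    (hle : ∀ a b c, S.ent a b → S.ent b a → (pr c a ↔ pr c b))
    (hld : ∀ a b c, pr b a → pr c a → pr (S.or b c) a) :
    ∀ a b, MInf S pr a b ↔ pr (S.not b) (S.not a) :=
  stmt17_general S pr hrefl hlm hld
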